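/- arXiv:1403.6866 — 2 statements merged into one kernel-verified Lean document; each statement's English description precedes it below -/
import Mathlib

section
/- Proper condition for k-spaces: if X, Y, Z are k-spaces and f : X ×_k Y → Z is continuous (where ×_k is the k-ified product), then the function g : X → kM(Y,Z) defined by g(x)(y) = f(x,y) is well-defined and continuous, where M(Y,Z) carries the compact-open topology and kM(Y,Z) is its k-ification. -/
/-!
If `Y` is a k-space and `K` is compact Hausdorff, then `K × Y` is already a k-space: for a
k-open `s ∋ (a, b)`, take a compact neighbourhood `Q` of `a` inside the slice of `s` at `b`;
the tube lemma, applied over every compact Hausdorff probe of `Y`, shows that the `y` with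
`Q × {y} ⊆ s` form an open set. So for each probe `c : K → X` the map `(k, y) ↦ f (c k, y)`
is continuous on `K × Y` and curries to a continuous `K → C(Y, Z)`, i.e. `g` is continuous on
the k-space `X` into the compact-open topology; functoriality of k-ification then upgrades the
target to `kTop C(Y, Z)`.
-/

open TopologicalSpace Topology

universe u

/-- The k-ification: the final topology on `X` relative to all continuous maps
from compact Hausdorff spaces into `X`. -/
def kTop (X : Type u) [TopologicalSpace X] : TopologicalSpace X :=
  ⨆ (C : CompHaus.{u}) (g : C → X) (_ : Continuous g),
    TopologicalSpace.coinduced g inferInstance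

section KTop

variable {W W' : Type u} [tW : TopologicalSpace W]

lemma kTop_le : kTop W ≤ tW :=
  iSup_le fun _ => iSup_le fun _ => iSup_le fun hg => continuous_iff_coinduced_le.1 hg

lemma continuous_kTop_rng {C : CompHaus.{u}} {c : C → W} (hc : Continuous c) :
    Continuous[_, kTop W] c :=
  continuous_iff_coinduced_le.2 <| le_iSup_of_le C <| le_iSup_of_le c <| le_iSup_of_le hc le_rfl

lemma isOpen_kTop_iff {s : Set W} :
    IsOpen[kTop W] s ↔ ∀ (C : CompHaus.{u}) (c : C → W), Continuous c → IsOpen (c ⁻¹' s) := by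
  rw [kTop]
  simp only [isOpen_iSup_iff, isOpen_coinduced]

lemma continuous_kTop_dom {t' : TopologicalSpace W'} {h : W → W'}
    (H : ∀ (C : CompHaus.{u}) (c : C → W), Continuous c → Continuous[_, t'] (h ∘ c)) :
    Continuous[kTop W, t'] h :=
  continuous_def.2 fun _ hs => isOpen_kTop_iff.2 fun C c hc => (H C c hc).isOpen_preimage _ hs

lemma Continuous.kTop_kTop [TopologicalSpace W'] {h : W → W'} (hh : Continuous h) :
    Continuous[kTop W, kTop W'] h :=
  continuous_kTop_dom fun _ _ hc => continuous_kTop_rng (hh.comp hc)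

end KTop

section Prod

variable {K Y : Type u} [TopologicalSpace K] [CompactSpace K] [T2Space K] [tY : TopologicalSpace Y]

lemma isOpen_setOf_forall_mem_of_isOpen_kTop (hY : kTop Y = tY) {s : Set (K × Y)}
    (hs : IsOpen[kTop (K × Y)] s) {Q : Set K} (hQ : IsCompact Q) :
    IsOpen {y : Y | ∀ k ∈ Q, (k, y) ∈ s} := by
  rw [← hY, isOpen_kTop_iff]
  intro D q hq
  have hO : IsOpen (Prod.map id q ⁻¹' s) :=
    isOpen_kTop_iff.1 hs (CompHaus.of (K × D)) _ (continuous_id.prodMap hq)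
  refine isOpen_iff_forall_mem_open.2 fun d hd => ?_
  obtain ⟨u, v, -, hv, hQu, hdv, huv⟩ := generalized_tube_lemma hQ isCompact_singleton hO
    (by rintro ⟨k, d'⟩ ⟨hk, rfl⟩; exact hd k hk)
  exact ⟨v, fun d' hd' k hk => huv (Set.mk_mem_prod (hQu hk) hd'), hv, hdv rfl⟩

lemma kTop_prod_of_compactSpace (hY : kTop Y = tY) :
    kTop (K × Y) = instTopologicalSpaceProd := by
  refine le_antisymm kTop_le fun s hs => isOpen_iff_forall_mem_open.2 ?_
  rintro ⟨a, b⟩ hab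
  have hslice : IsOpen {k : K | (k, b) ∈ s} :=
    isOpen_kTop_iff.1 hs (CompHaus.of K) _ (continuous_id.prodMk continuous_const)
  obtain ⟨Q, hQ, haQ, hQs⟩ := exists_compact_subset hslice hab
  refine ⟨interior Q ×ˢ {y | ∀ k ∈ Q, (k, y) ∈ s}, ?_,
    isOpen_interior.prod (isOpen_setOf_forall_mem_of_isOpen_kTop hY hs hQ), haQ,
    fun k hk => hQs hk⟩
  rintro ⟨k, y⟩ ⟨hk, hy⟩
  exact hy k (interior_subset hk)

lemma Continuous.comp_prodMap_of_kTop {X Z : Type u} [TopologicalSpace X]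
    [tZ : TopologicalSpace Z] (hY : kTop Y = tY) {f : X × Y → Z}
    (hf : Continuous[kTop (X × Y), tZ] f) {c : K → X}
    (hc : Continuous c) : Continuous fun p : K × Y => f (c p.1, p.2) := by
  have hcY : Continuous[kTop (K × Y), kTop (X × Y)] (Prod.map c id) :=
    (hc.prodMap continuous_id).kTop_kTop
  rw [kTop_prod_of_compactSpace hY] at hcY
  exact @Continuous.comp _ _ _ _ (kTop (X × Y)) _ _ _ hf hcY

end Prod

theorem kTop_proper_condition_general {X Y Z : Type u}
    [tX : TopologicalSpace X] [tY : TopologicalSpace Y] [tZ : TopologicalSpace Z]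
    (hX : kTop X = tX) (hY : kTop Y = tY)
    (f : X × Y → Z) (hf : Continuous[kTop (X × Y), tZ] f) :
    ∃ g : X → C(Y, Z), (∀ x y, g x y = f (x, y)) ∧
      Continuous[tX, kTop C(Y, Z)] g := by
  have hslice (x : X) : Continuous fun y => f (x, y) := by
    have hxY : Continuous[kTop Y, kTop (X × Y)] (x, ·) := (Continuous.prodMk_right x).kTop_kTop
    rw [hY] at hxY
    exact @Continuous.comp _ _ _ _ (kTop (X × Y)) _ _ _ hf hxY
  let g : X → C(Y, Z) := fun x => ⟨fun y => f (x, y), hslice x⟩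
  have hg : Continuous g := by
    rw [← hX]
    exact continuous_kTop_dom fun K c hc =>
      (ContinuousMap.curry ⟨_, hf.comp_prodMap_of_kTop hY hc⟩).continuous
  have hgk := hg.kTop_kTop
  rw [hX] at hgk
  exact ⟨g, fun _ _ => rfl, hgk⟩

theorem kTop_proper_condition {X Y Z : Type u}
    [tX : TopologicalSpace X] [tY : TopologicalSpace Y] [tZ : TopologicalSpace Z]
    (hX : kTop X = tX) (hY : kTop Y = tY) (hZ : kTop Z = tZ)
    (f : X × Y → Z) (hf : Continuous[kTop (X × Y), tZ] f) :
    ∃ g : X → C(Y, Z), (∀ x y, g x y = f (x, y)) ∧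
      Continuous[tX, kTop C(Y, Z)] g :=
  kTop_proper_condition_general (tX := tX) (tY := tY) (tZ := tZ) hX hY f hf
end

section
/- Exponential law for k-spaces: for k-spaces X, Y, Z, a function f : X ×_k Y → Z is continuous if and only if the associated function g : X → kM(Y,Z), g(x)(y) = f(x,y), is continuous; this gives a bijection between continuous maps X ×_k Y → Z and continuous maps X → kM(Y,Z). -/
open TopologicalSpace Topology

universe u

/-!
Both directions are tested on compact Hausdorff probes `K → X × Y`. For a probe `p : K → X`,
the map `K × Y → Z`, `(c, y) ↦ f (p c, y)`, is continuous because `K × Y` is again a k-space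
when `K` is compact Hausdorff and `Y` is a k-space; as `K` is locally compact, this is the
same as continuity of `K → C(Y, Z)`. Conversely, along a probe `r : K → X × Y`, the value
`f (r d)` is evaluation of `g (r d).1` at `(r d).2`, which is jointly continuous after
precomposing with `(r ·).2` to land in `C(K, Z)`, where `K` is locally compact.
-/

/-- `Continuous.comp` with the topologies as plain implicit arguments: instance synthesis
would otherwise replace a topology such as `kTop X` by the ambient instance. -/
theorem Continuous.comp_explicit {α β γ : Type*} {tα : TopologicalSpace α}
    {tβ : TopologicalSpace β} {tγ : TopologicalSpace γ} {g : β → γ} {f : α → β}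
    (hg : Continuous[tβ, tγ] g) (hf : Continuous[tα, tβ] f) : Continuous[tα, tγ] (g ∘ f) :=
  hg.comp hf

section KTop

variable {X Z : Type u} [tX : TopologicalSpace X] {tZ : TopologicalSpace Z}

theorem kTop_le_s15 : kTop X ≤ tX :=
  iSup_le fun _ => iSup_le fun _ => iSup_le fun hg => continuous_iff_coinduced_le.mp hg

theorem continuous_kTop_of_compactSpace {K : Type u} [TopologicalSpace K] [CompactSpace K]
    [T2Space K] {p : K → X} (hp : Continuous p) : Continuous[_, kTop X] p := by
  rw [continuous_iff_coinduced_le]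
  exact le_iSup_of_le (CompHaus.of K) (le_iSup_of_le p (le_iSup_of_le hp le_rfl))

theorem continuous_kTop_dom_iff {f : X → Z} :
    Continuous[kTop X, tZ] f ↔
      ∀ (K : Type u) [TopologicalSpace K] [CompactSpace K] [T2Space K] (p : K → X),
        Continuous p → Continuous[_, tZ] (f ∘ p) := by
  refine ⟨fun hf K _ _ _ p hp => hf.comp_explicit (continuous_kTop_of_compactSpace hp),
    fun h => ?_⟩
  exact continuous_iSup_dom.2 fun C => continuous_iSup_dom.2 fun p =>
    continuous_iSup_dom.2 fun hp => continuous_coinduced_dom.2 (h C p hp)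

theorem continuous_of_kTop_eq (hX : kTop X = tX) {f : X → Z}
    (h : ∀ (K : Type u) [TopologicalSpace K] [CompactSpace K] [T2Space K] (p : K → X),
      Continuous p → Continuous[_, tZ] (f ∘ p)) :
    Continuous[tX, tZ] f :=
  hX ▸ continuous_kTop_dom_iff.2 h

end KTop

theorem continuous_of_continuous_kTop_prod {K Y Z : Type u} [TopologicalSpace K]
    [CompactSpace K] [T2Space K] [tY : TopologicalSpace Y] [TopologicalSpace Z]
    (hY : kTop Y = tY) {u : K × Y → Z} (hu : Continuous[kTop (K × Y), _] u) :
    Continuous u := by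
  have hslice (y : Y) : Continuous fun c : K => u (c, y) :=
    hu.comp_explicit (continuous_kTop_of_compactSpace (continuous_id.prodMk continuous_const))
  let F : Y → C(K, Z) := fun y => ⟨fun c => u (c, y), hslice y⟩
  have hF : Continuous F := continuous_of_kTop_eq hY fun D _ _ _ q hq =>
    ContinuousMap.continuous_of_continuous_uncurry _ <| hu.comp_explicit <|
      continuous_kTop_of_compactSpace (continuous_snd.prodMk (hq.comp continuous_fst))
  exact (ContinuousMap.continuous_uncurry_of_continuous ⟨F, hF⟩).comp continuous_swap

theorem continuous_apply_of_locallyCompactSpace {D Y Z : Type*} [TopologicalSpace D]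
    [LocallyCompactSpace D] [TopologicalSpace Y] [TopologicalSpace Z] {φ : D → C(Y, Z)}
    {ψ : D → Y} (hφ : Continuous φ) (hψ : Continuous ψ) :
    Continuous fun d => φ d (ψ d) :=
  ((ContinuousMap.continuous_precomp ⟨ψ, hψ⟩).comp hφ).eval continuous_id

theorem kTop_exponential_law_general {X Y Z : Type u}
    [tX : TopologicalSpace X] [tY : TopologicalSpace Y] [tZ : TopologicalSpace Z]
    (hX : kTop X = tX) (hY : kTop Y = tY)
    (f : X × Y → Z) :
    Continuous[kTop (X × Y), tZ] f ↔
      ∃ g : X → C(Y, Z), (∀ x y, g x y = f (x, y)) ∧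
        Continuous[tX, kTop C(Y, Z)] g := by
  constructor
  · intro hf
    have hslice (x : X) : Continuous fun y : Y => f (x, y) :=
      hf.comp_explicit <| continuous_of_kTop_eq hY fun _ _ _ _ q hq =>
        continuous_kTop_of_compactSpace (continuous_const.prodMk hq)
    refine ⟨fun x => ⟨fun y => f (x, y), hslice x⟩, fun _ _ => rfl, ?_⟩
    refine continuous_of_kTop_eq hX fun K _ _ _ p hp => continuous_kTop_of_compactSpace ?_
    refine ContinuousMap.continuous_of_continuous_uncurry _ ?_
    refine continuous_of_continuous_kTop_prod hY (continuous_kTop_dom_iff.2 ?_)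
    exact fun D _ _ _ r hr => hf.comp_explicit <| continuous_kTop_of_compactSpace <|
      ((hp.comp continuous_fst).prodMk continuous_snd).comp hr
  · rintro ⟨g, hg, hgc⟩
    refine continuous_kTop_dom_iff.2 fun K _ _ _ r hr => ?_
    have hgr : Continuous fun d => g (r d).1 :=
      (continuous_le_rng kTop_le_s15 hgc).comp (continuous_fst.comp hr)
    have key := continuous_apply_of_locallyCompactSpace hgr (continuous_snd.comp hr)
    simpa only [hg, Function.comp_def, Prod.mk.eta] using key

theorem kTop_exponential_law {X Y Z : Type u}
    [tX : TopologicalSpace X] [tY : TopologicalSpace Y] [tZ : TopologicalSpace Z]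
    (hX : kTop X = tX) (hY : kTop Y = tY) (hZ : kTop Z = tZ)
    (f : X × Y → Z) :
    Continuous[kTop (X × Y), tZ] f ↔
      ∃ g : X → C(Y, Z), (∀ x y, g x y = f (x, y)) ∧
        Continuous[tX, kTop C(Y, Z)] g :=
  kTop_exponential_law_general (tX := tX) (tY := tY) (tZ := tZ) hX hY f
end
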